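/- arXiv:2502.16019 — 6 statements merged into one kernel-verified Lean document; each statement's English description precedes it below -/
import Mathlib

section
/- Let f and g be non-decreasing real-valued functions on {0,1,2,...} with -f(0) < g(0). Let (M_n)_{n ≥ 0} be a supermartingale bounded below by M_n ≥ -f(n) for all n ≥ 0, with initial expectation E[M_0] ∈ [-f(0), g(0)]. Then P(∃ n ≥ 0 : M_n ≥ g(n)) ≤ 1 - ((g(0) - E[M_0])/(g(0) + f(0))) · ∏_{n=1}^∞ (g(n) + f(n-1))/(g(n) + f(n)). -/
/-!
Let `A n` be the event that `M` stays strictly below `g` up to time `n`, and let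
`W n = ∫_{A n} (g n - M n)`. The lower bound `M n ≥ -f n` gives `W n ≤ (g n + f n) P(A n)`.
Going from `A n` to `A (n + 1)` only discards paths with `M (n + 1) ≥ g (n + 1)`, on which the
integrand is nonpositive, so the supermartingale property yields
`W (n + 1) ≥ W n + (g (n + 1) - g n) P(A n) ≥ W n (g (n + 1) + f n) / (g n + f n)`.
Starting from `W 0 ≥ g 0 - E[M 0]` and telescoping,
`P(A n) ≥ (g 0 - E[M 0]) / (g 0 + f 0) · ∏_{k<n} (g (k+1) + f k) / (g (k+1) + f (k+1))`,
and letting `n → ∞` bounds the probability of never crossing `g` from below.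
-/

open MeasureTheory Filter Topology

theorem tprod_le_prod_of_nonneg_of_le_one {ι : Type*} {r : ι → ℝ} (h0 : ∀ i, 0 ≤ r i)
    (h1 : ∀ i, r i ≤ 1) (s : Finset ι) : ∏' i, r i ≤ ∏ i ∈ s, r i := by
  have hbdd : BddBelow (Set.range fun s : Finset ι => ∏ i ∈ s, r i) :=
    ⟨0, by rintro _ ⟨t, rfl⟩; exact Finset.prod_nonneg fun i _ => h0 i⟩
  have hprod : HasProd r (⨅ s : Finset ι, ∏ i ∈ s, r i) :=
    tendsto_atTop_ciInf (Finset.prod_anti_set_of_le_one h0 h1) hbdd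
  rw [hprod.tprod_eq]
  exact ciInf_le hbdd s

theorem setIntegral_le_setIntegral_of_nonpos_sdiff {X : Type*} {mX : MeasurableSpace X}
    {μ : Measure X} {h : X → ℝ} {s t : Set X} (hs : MeasurableSet s) (ht : MeasurableSet t)
    (hts : t ⊆ s) (hh : IntegrableOn h s μ) (hneg : ∀ x ∈ s \ t, h x ≤ 0) :
    ∫ x in s, h x ∂μ ≤ ∫ x in t, h x ∂μ := by
  have := setIntegral_nonpos (μ := μ) (hs.diff ht) hneg
  rw [setIntegral_sdiff ht hh hts] at this
  linarith

section

variable {Ω : Type*} {mΩ : MeasurableSpace Ω} {μ : Measure Ω} {𝒢 : Filtration ℕ mΩ}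
  {M : ℕ → Ω → ℝ} {f g : ℕ → ℝ}

def stayBelow (M : ℕ → Ω → ℝ) (g : ℕ → ℝ) (n : ℕ) : Set Ω := {ω | ∀ k ≤ n, M k ω < g k}

theorem stayBelow_zero : stayBelow M g 0 = {ω | M 0 ω < g 0} := by
  ext ω; simp [stayBelow]

theorem stayBelow_succ (n : ℕ) :
    stayBelow M g (n + 1) = stayBelow M g n ∩ {ω | M (n + 1) ω < g (n + 1)} := by
  ext ω; simp [stayBelow, Nat.le_succ_iff, or_imp, forall_and]

theorem antitone_stayBelow : Antitone (stayBelow M g) :=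
  fun _ _ hmn _ hω k hk => hω k (hk.trans hmn)

theorem iInter_stayBelow : ⋂ n, stayBelow M g n = {ω | ∀ n, M n ω < g n} := by
  ext ω
  simp only [stayBelow, Set.mem_iInter, Set.mem_ofPred_eq]
  exact ⟨fun h n => h n n le_rfl, fun h _ k _ => h k⟩

theorem measurableSet_stayBelow (hM : StronglyAdapted 𝒢 M) (n : ℕ) :
    MeasurableSet[𝒢 n] (stayBelow M g n) := by
  have : stayBelow M g n = ⋂ k ∈ Set.Iic n, {ω | M k ω < g k} := by ext; simp [stayBelow]
  rw [this]
  exact .biInter (Set.to_countable _) fun k hk =>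
    𝒢.mono hk _ (measurableSet_lt (hM k).measurable measurable_const)

theorem tendsto_measureReal_stayBelow [IsFiniteMeasure μ] (hM : StronglyAdapted 𝒢 M) :
    Tendsto (fun n => μ.real (stayBelow M g n)) atTop
      (𝓝 (μ.real {ω | ∀ n, M n ω < g n})) := by
  rw [← iInter_stayBelow]
  exact (ENNReal.tendsto_toReal (measure_ne_top _ _)).comp <|
    tendsto_measure_iInter_atTop
      (fun n => (𝒢.le n _ (measurableSet_stayBelow hM n)).nullMeasurableSet)
      antitone_stayBelow ⟨0, measure_ne_top _ _⟩

noncomputable def deficit (μ : Measure Ω) (M : ℕ → Ω → ℝ) (g : ℕ → ℝ) (n : ℕ) : ℝ :=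
  ∫ ω in stayBelow M g n, (g n - M n ω) ∂μ

theorem deficit_le [IsFiniteMeasure μ] {n : ℕ} (hint : Integrable (M n) μ)
    (hlb : ∀ᵐ ω ∂μ, -f n ≤ M n ω) :
    deficit μ M g n ≤ (g n + f n) * μ.real (stayBelow M g n) := by
  calc deficit μ M g n ≤ ∫ _ in stayBelow M g n, (g n + f n) ∂μ := by
        refine integral_mono_ae ((integrable_const _).sub hint.integrableOn) (integrable_const _) ?_
        filter_upwards [ae_restrict_of_ae hlb] with ω hω
        linarith
    _ = (g n + f n) * μ.real (stayBelow M g n) := by rw [setIntegral_const, smul_eq_mul, mul_comm]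

theorem sub_integral_le_deficit_zero [IsProbabilityMeasure μ] (hM : StronglyAdapted 𝒢 M)
    (hint : Integrable (M 0) μ) : g 0 - ∫ ω, M 0 ω ∂μ ≤ deficit μ M g 0 := by
  have key := setIntegral_le_setIntegral_of_nonpos_sdiff (μ := μ) (h := fun ω => g 0 - M 0 ω)
    MeasurableSet.univ (𝒢.le 0 _ (measurableSet_stayBelow hM 0)) (Set.subset_univ _)
    ((integrable_const _).sub hint).integrableOn (by
      rintro ω ⟨-, hω⟩
      simp only [stayBelow_zero, Set.mem_ofPred_eq, not_lt] at hω
      linarith)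
  rwa [setIntegral_univ, integral_sub (integrable_const _) hint, integral_const, probReal_univ,
    one_smul] at key

theorem deficit_add_le_deficit_succ [IsFiniteMeasure μ] (hM : Supermartingale M 𝒢 μ) (n : ℕ) :
    deficit μ M g n + (g (n + 1) - g n) * μ.real (stayBelow M g n) ≤ deficit μ M g (n + 1) := by
  have hA := measurableSet_stayBelow (g := g) hM.stronglyAdapted n
  have hA' := measurableSet_stayBelow (g := g) hM.stronglyAdapted (n + 1)
  calc deficit μ M g n + (g (n + 1) - g n) * μ.real (stayBelow M g n)
      = g (n + 1) * μ.real (stayBelow M g n) - ∫ ω in stayBelow M g n, M n ω ∂μ := by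
        rw [deficit, integral_sub (integrable_const _) (hM.integrable n).integrableOn,
          setIntegral_const, smul_eq_mul]
        ring
    _ ≤ ∫ ω in stayBelow M g n, (g (n + 1) - M (n + 1) ω) ∂μ := by
        rw [integral_sub (integrable_const _) (hM.integrable _).integrableOn, setIntegral_const,
          smul_eq_mul]
        linarith [hM.setIntegral_le n.le_succ hA]
    _ ≤ deficit μ M g (n + 1) := by
        refine setIntegral_le_setIntegral_of_nonpos_sdiff (𝒢.le n _ hA) (𝒢.le _ _ hA')
          (antitone_stayBelow n.le_succ) ((integrable_const _).sub (hM.integrable _)).integrableOn ?_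
        rintro ω ⟨hω, hω'⟩
        simp only [stayBelow_succ, Set.mem_inter_iff, Set.mem_ofPred_eq, not_and, not_lt] at hω'
        linarith [hω' hω]

theorem deficit_mul_le_deficit_succ [IsFiniteMeasure μ] (hM : Supermartingale M 𝒢 μ) {n : ℕ}
    (hlb : ∀ᵐ ω ∂μ, -f n ≤ M n ω) (hq : 0 < g n + f n) (hg : g n ≤ g (n + 1)) :
    deficit μ M g n * ((g (n + 1) + f n) / (g n + f n)) ≤ deficit μ M g (n + 1) := by
  have hW : deficit μ M g n / (g n + f n) ≤ μ.real (stayBelow M g n) :=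
    (div_le_iff₀ hq).2 (by linarith [deficit_le (g := g) (hM.integrable n) hlb])
  calc deficit μ M g n * ((g (n + 1) + f n) / (g n + f n))
      = deficit μ M g n + (g (n + 1) - g n) * (deficit μ M g n / (g n + f n)) := by
        field_simp
        ring
    _ ≤ deficit μ M g n + (g (n + 1) - g n) * μ.real (stayBelow M g n) := by gcongr
    _ ≤ deficit μ M g (n + 1) := deficit_add_le_deficit_succ hM n

theorem mul_prod_le_measureReal_stayBelow [IsProbabilityMeasure μ] (hM : Supermartingale M 𝒢 μ)
    (hlb : ∀ n, ∀ᵐ ω ∂μ, -f n ≤ M n ω) (hq : ∀ n, 0 < g n + f n) (hg : Monotone g) (n : ℕ) :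
    (g 0 - ∫ ω, M 0 ω ∂μ) / (g 0 + f 0) *
      ∏ k ∈ Finset.range n, (g (k + 1) + f k) / (g (k + 1) + f (k + 1)) ≤
        μ.real (stayBelow M g n) := by
  suffices h : ∀ n, (g 0 - ∫ ω, M 0 ω ∂μ) / (g 0 + f 0) *
      (∏ k ∈ Finset.range n, (g (k + 1) + f k) / (g (k + 1) + f (k + 1))) * (g n + f n) ≤
        deficit μ M g n from
    le_of_mul_le_mul_right ((h n).trans <| (deficit_le (hM.integrable n) (hlb n)).trans_eq
      (mul_comm _ _)) (hq n)
  intro n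
  induction n with
  | zero =>
    rw [Finset.prod_range_zero, mul_one, div_mul_cancel₀ _ (hq 0).ne']
    exact sub_integral_le_deficit_zero hM.stronglyAdapted (hM.integrable 0)
  | succ n ih =>
    have hratio : 0 ≤ (g (n + 1) + f n) / (g n + f n) :=
      div_nonneg (by linarith [hq n, hg n.le_succ]) (hq n).le
    calc _ = (g 0 - ∫ ω, M 0 ω ∂μ) / (g 0 + f 0) *
          (∏ k ∈ Finset.range n, (g (k + 1) + f k) / (g (k + 1) + f (k + 1))) * (g n + f n) *
            ((g (n + 1) + f n) / (g n + f n)) := by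
          rw [Finset.prod_range_succ]
          field_simp [(hq n).ne', (hq (n + 1)).ne']
      _ ≤ deficit μ M g n * ((g (n + 1) + f n) / (g n + f n)) :=
          mul_le_mul_of_nonneg_right ih hratio
      _ ≤ deficit μ M g (n + 1) := deficit_mul_le_deficit_succ hM (hlb n) (hq n) (hg n.le_succ)

end

/-- **Generalised Ville's inequality** (Theorem 2(a)): a supermartingale `M`
bounded below by the non-increasing curve `-f` crosses the non-decreasing
threshold curve `g` with probability at most
`1 - ((g 0 - E[M 0])/(g 0 + f 0)) · ∏_{n≥1} (g n + f (n-1))/(g n + f n)`. -/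
theorem generalised_villes_inequality {Ω : Type*} {mΩ : MeasurableSpace Ω}
    {μ : Measure Ω} [IsProbabilityMeasure μ] {𝒢 : Filtration ℕ mΩ}
    {M : ℕ → Ω → ℝ} {f g : ℕ → ℝ}
    (hf : Monotone f) (hg : Monotone g) (h0 : -f 0 < g 0)
    (hM : Supermartingale M 𝒢 μ)
    (hlb : ∀ n, ∀ᵐ ω ∂μ, -f n ≤ M n ω)
    (hinit : (∫ ω, M 0 ω ∂μ) ∈ Set.Icc (-f 0) (g 0)) :
    (μ {ω | ∃ n, g n ≤ M n ω}).toReal ≤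
      1 - ((g 0 - ∫ ω, M 0 ω ∂μ) / (g 0 + f 0)) *
        ∏' n : ℕ, ((g (n + 1) + f n) / (g (n + 1) + f (n + 1))) := by
  have hq : ∀ n, 0 < g n + f n := fun n => by linarith [hf n.zero_le, hg n.zero_le]
  set s := (g 0 - ∫ ω, M 0 ω ∂μ) / (g 0 + f 0)
  set r : ℕ → ℝ := fun n => (g (n + 1) + f n) / (g (n + 1) + f (n + 1))
  have hs : 0 ≤ s := div_nonneg (sub_nonneg.2 hinit.2) (hq 0).le
  have hr0 : ∀ n, 0 ≤ r n := fun n => div_nonneg (by linarith [hq n, hg n.le_succ]) (hq _).le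
  have hr1 : ∀ n, r n ≤ 1 := fun n => div_le_one_of_le₀ (by linarith [hf n.le_succ]) (hq _).le
  have hbound : ∀ n, s * ∏' k, r k ≤ μ.real (stayBelow M g n) := fun n =>
    (mul_le_mul_of_nonneg_left (tprod_le_prod_of_nonneg_of_le_one hr0 hr1 _) hs).trans
      (mul_prod_le_measureReal_stayBelow hM hlb hq hg n)
  have hnever : s * ∏' k, r k ≤ μ.real {ω | ∀ n, M n ω < g n} :=
    ge_of_tendsto (tendsto_measureReal_stayBelow hM.stronglyAdapted) (.of_forall hbound)
  have hcross : {ω | ∃ n, g n ≤ M n ω} = {ω | ∀ n, M n ω < g n}ᶜ := by ext; simp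
  rw [← measureReal_def, hcross, probReal_compl_eq_one_sub (by
    rw [← iInter_stayBelow]
    exact .iInter fun n => 𝒢.le n _ (measurableSet_stayBelow hM.stronglyAdapted n))]
  linarith
end

section
/- Let f and g be non-decreasing real-valued functions on {0,1,2,...} with -f(0) < g(0). For any m ∈ [-f(0), g(0)] there exists a filtered probability space and a martingale (M_n)_{n ≥ 0} on it with M_n ≥ -f(n) for all n ≥ 0 and E[M_0] = m, such that P(∃ n ≥ 0 : M_n ≥ g(n)) = 1 - ((g(0) - m)/(g(0) + f(0))) · ∏_{n=1}^∞ (g(n) + f(n-1))/(g(n) + f(n)). -/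
/-!
The floor hugger is realised on `ℕ∞`, the sample point being the time `τ` at which the process
leaves the floor `-f` for the barrier `g` (`τ = ⊤`: never). Its law is fixed by the survival
function `S n = P(τ ≥ n)`, and `M n = g τ` on `{τ ≤ n}`, `M n = -f n` otherwise.

Knowing `min τ (n + 1)` is knowing `M` up to time `n`, and `{τ > n}` is an atom of this
σ-algebra off which `M (n + 1) = M n`. So `M` is a martingale as soon as both have the same
integral over `{τ > n}`, i.e. `S (n + 2) (g (n + 1) + f (n + 1)) = S (n + 1) (g (n + 1) + f n)`.
Together with `S 1 = (g 0 - m) / (g 0 + f 0)`, forced by `E[M 0] = m`, this makes `S` the partial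
products of the infinite product, and `M` reaches `g` except on `{τ = ⊤}`, of probability `lim S`.
-/

open MeasureTheory Filter Topology Set

lemma Real.multipliable_of_nonneg_of_le_one {ι : Type*} {a : ι → ℝ} (h0 : ∀ i, 0 ≤ a i)
    (h1 : ∀ i, a i ≤ 1) : Multipliable a :=
  ⟨_, tendsto_atTop_ciInf (Finset.prod_anti_set_of_le_one h0 h1)
    ⟨0, by rintro _ ⟨s, rfl⟩; exact Finset.prod_nonneg fun i _ ↦ h0 i⟩⟩

lemma hasSum_sub_succ_of_antitone {Q : ℕ → ℝ} {l : ℝ} (hQ : Antitone Q)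
    (h : Tendsto Q atTop (𝓝 l)) : HasSum (fun n ↦ Q n - Q (n + 1)) (Q 0 - l) := by
  rw [hasSum_iff_tendsto_nat_of_nonneg fun n ↦ sub_nonneg.2 (hQ n.le_succ)]
  simp_rw [Finset.sum_range_sub']
  exact tendsto_const_nhds.sub h

lemma ENat.hasSum_of_hasSum_natCast {w : ℕ∞ → ℝ} {a : ℝ} (h : HasSum (fun n : ℕ ↦ w n) a) :
    HasSum w (a + w ⊤) := by
  convert ((hasSum_extend_zero Nat.cast_injective).2 h).add (hasSum_ite_eq (⊤ : ℕ∞) (w ⊤)) using 1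
  ext t
  induction t using ENat.recTopCoe with
  | top => simp
  | coe n => simp [Nat.cast_injective.extend_apply]

lemma setIntegral_eq_of_eqOn_compl_of_atom {Ω : Type*} [MeasurableSpace Ω] {μ : Measure Ω}
    {F G : Ω → ℝ} {B s : Set Ω} (hF : Integrable F μ) (hG : Integrable G μ) (hB : MeasurableSet B)
    (hs : MeasurableSet s) (hBs : B ⊆ s ∨ Disjoint B s) (hFG : EqOn F G Bᶜ)
    (hint : ∫ ω in B, F ω ∂μ = ∫ ω in B, G ω ∂μ) :
    ∫ ω in s, F ω ∂μ = ∫ ω in s, G ω ∂μ := by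
  rw [← integral_inter_add_sdiff hB hF.integrableOn, ← integral_inter_add_sdiff hB hG.integrableOn,
    setIntegral_congr_fun (hs.diff hB) (hFG.mono fun ω hω ↦ hω.2)]
  congr 1
  rcases hBs with hBs | hBs
  · rwa [inter_eq_right.2 hBs]
  · simp [hBs.symm.inter_eq]

structure SurvivalFunction where
  toFun : ℕ → ℝ
  lim : ℝ
  map_zero : toFun 0 = 1
  antitone : Antitone toFun
  nonneg : ∀ n, 0 ≤ toFun n
  tendsto : Tendsto toFun atTop (𝓝 lim)

namespace SurvivalFunction

instance : CoeFun SurvivalFunction fun _ ↦ ℕ → ℝ := ⟨toFun⟩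

variable (S : SurvivalFunction)

noncomputable def weight (t : ℕ∞) : ℝ := ENat.recTopCoe S.lim (fun n ↦ S n - S (n + 1)) t

@[simp] lemma weight_top : S.weight ⊤ = S.lim := rfl

@[simp] lemma weight_natCast (n : ℕ) : S.weight n = S n - S (n + 1) := rfl

lemma weight_nonneg (t : ℕ∞) : 0 ≤ S.weight t := by
  induction t using ENat.recTopCoe with
  | top => exact ge_of_tendsto' S.tendsto S.nonneg
  | coe n => exact sub_nonneg.2 (S.antitone n.le_succ)

lemma hasSum_indicator_weight_Ici (k : ℕ) :
    HasSum ((Ici (k : ℕ∞)).indicator S.weight) (S k) := by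
  -- the weights from `k` on telescope along `n ↦ S (max n k)`
  have htelescope := hasSum_sub_succ_of_antitone (Q := fun n ↦ S (max n k))
    (fun _ _ h ↦ S.antitone (max_le_max_right k h))
    (S.tendsto.comp (tendsto_atTop_mono (le_max_left · k) tendsto_id))
  have hnat : HasSum (fun n : ℕ ↦ (Ici (k : ℕ∞)).indicator S.weight n) (S k - S.lim) := by
    convert htelescope using 1
    · ext n
      by_cases h : k ≤ n
      · simp [h, max_eq_left (h.trans n.le_succ)]
      · simp [h, max_eq_right (Nat.le_of_not_le h), max_eq_right (Nat.succ_le_of_lt (not_le.1 h))]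
    · simp
  simpa using ENat.hasSum_of_hasSum_natCast hnat

lemma hasSum_weight : HasSum S.weight 1 := by
  simpa [← S.map_zero] using S.hasSum_indicator_weight_Ici 0

noncomputable def pmf : PMF ℕ∞ where
  val t := ENNReal.ofReal (S.weight t)
  property := by
    rw [← ENNReal.ofReal_one, ← S.hasSum_weight.tsum_eq,
      ENNReal.ofReal_tsum_of_nonneg S.weight_nonneg S.hasSum_weight.summable]
    exact ENNReal.summable.hasSum

@[simp] lemma pmf_apply (t : ℕ∞) : S.pmf t = ENNReal.ofReal (S.weight t) := rfl

noncomputable def law : Measure ℕ∞ := S.pmf.toMeasure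

instance : IsProbabilityMeasure S.law := PMF.toMeasure.isProbabilityMeasure _

lemma law_real_singleton (t : ℕ∞) : S.law.real {t} = S.weight t := by
  rw [measureReal_def, law, PMF.toMeasure_apply_singleton _ _ (measurableSet_singleton t)]
  exact ENNReal.toReal_ofReal (S.weight_nonneg t)

lemma law_real (s : Set ℕ∞) : S.law.real s = ∑' t, s.indicator S.weight t := by
  have hs : s.indicator S.pmf = fun t ↦ ENNReal.ofReal (s.indicator S.weight t) := by
    ext t
    by_cases ht : t ∈ s <;> simp [ht]
  rw [measureReal_def, law, PMF.toMeasure_apply _ .of_discrete, hs,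
    ← ENNReal.ofReal_tsum_of_nonneg (indicator_nonneg fun t _ ↦ S.weight_nonneg t)
      (S.hasSum_weight.summable.indicator s),
    ENNReal.toReal_ofReal (tsum_nonneg (indicator_nonneg fun t _ ↦ S.weight_nonneg t))]

lemma law_real_Ici (k : ℕ) : S.law.real (Ici k) = S k := by
  rw [law_real, (S.hasSum_indicator_weight_Ici k).tsum_eq]

noncomputable def ofFactors (c : ℝ) (a : ℕ → ℝ) (hc : c ∈ Icc 0 1) (ha : ∀ k, a k ∈ Icc 0 1) :
    SurvivalFunction where
  toFun
    | 0 => 1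
    | n + 1 => c * ∏ k ∈ Finset.range n, a k
  lim := c * ∏' k, a k
  map_zero := rfl
  antitone := by
    refine antitone_nat_of_succ_le fun n ↦ ?_
    cases n with
    | zero => simpa using hc.2
    | succ n =>
      show c * ∏ k ∈ Finset.range (n + 1), a k ≤ c * ∏ k ∈ Finset.range n, a k
      rw [Finset.prod_range_succ, ← mul_assoc]
      exact mul_le_of_le_one_right (mul_nonneg hc.1 (Finset.prod_nonneg fun k _ ↦ (ha k).1)) (ha n).2
  nonneg
    | 0 => zero_le_one
    | n + 1 => mul_nonneg hc.1 (Finset.prod_nonneg fun k _ ↦ (ha k).1)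
  tendsto := by
    refine (tendsto_add_atTop_iff_nat 1).1 ?_
    exact ((Real.multipliable_of_nonneg_of_le_one (fun k ↦ (ha k).1) fun k ↦ (ha k).2).hasProd
      |>.tendsto_prod_nat).const_mul c

lemma ofFactors_one {c : ℝ} {a : ℕ → ℝ} (hc : c ∈ Icc 0 1) (ha : ∀ k, a k ∈ Icc 0 1) :
    ofFactors c a hc ha 1 = c :=
  (congrArg (c * ·) (Finset.prod_range_zero a)).trans (mul_one c)

lemma ofFactors_succ_succ {c : ℝ} {a : ℕ → ℝ} (hc : c ∈ Icc 0 1) (ha : ∀ k, a k ∈ Icc 0 1)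
    (n : ℕ) : ofFactors c a hc ha (n + 2) = ofFactors c a hc ha (n + 1) * a n := by
  show c * ∏ k ∈ Finset.range (n + 1), a k = c * (∏ k ∈ Finset.range n, a k) * a n
  rw [Finset.prod_range_succ, mul_assoc]

end SurvivalFunction

noncomputable def filtrationMinSucc : Filtration ℕ (inferInstance : MeasurableSpace ℕ∞) where
  seq n := MeasurableSpace.comap (min · (n + 1 : ℕ∞)) ⊤
  mono' i j hij := by
    have hij' : (i + 1 : ℕ∞) ≤ j + 1 := by exact_mod_cast Nat.succ_le_succ hij
    have : (min · (i + 1 : ℕ∞)) = (min · (i + 1 : ℕ∞)) ∘ (min · (j + 1 : ℕ∞)) := by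
      ext t
      rw [Function.comp_apply, min_assoc, min_eq_right hij']
    simp only
    rw [this, ← MeasurableSpace.comap_comp]
    exact MeasurableSpace.comap_mono le_top
  le' _ := le_top

lemma Ici_subset_or_disjoint_of_measurableSet_filtrationMinSucc {n : ℕ} {s : Set ℕ∞}
    (hs : MeasurableSet[filtrationMinSucc n] s) :
    Ici (n + 1 : ℕ∞) ⊆ s ∨ Disjoint (Ici (n + 1 : ℕ∞)) s := by
  obtain ⟨u, -, rfl⟩ := hs
  by_cases hu : (n + 1 : ℕ∞) ∈ u
  · exact Or.inl fun t (ht : _ ≤ t) ↦ by simpa [min_eq_right ht] using hu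
  · exact Or.inr (disjoint_left.2 fun t (ht : _ ≤ t) h ↦ hu (by simpa [min_eq_right ht] using h))

section FloorHugger

variable (f g : ℕ → ℝ)

noncomputable def floorHugger (n : ℕ) (t : ℕ∞) : ℝ := if t ≤ n then g t.toNat else -f n

variable {f g}

lemma floorHugger_natCast_of_le {n k : ℕ} (h : k ≤ n) : floorHugger f g n k = g k := by
  simp [floorHugger, h]

lemma floorHugger_of_succ_le {n : ℕ} {t : ℕ∞} (h : (n + 1 : ℕ∞) ≤ t) :
    floorHugger f g n t = -f n :=
  if_neg (not_le.2 ((ENat.add_one_le_iff (ENat.natCast_ne_top n)).1 h))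

lemma floorHugger_min_succ (n : ℕ) (t : ℕ∞) :
    floorHugger f g n (min t (n + 1)) = floorHugger f g n t := by
  rcases le_or_gt (n + 1 : ℕ∞) t with h | h
  · rw [min_eq_right h, floorHugger_of_succ_le h, floorHugger_of_succ_le le_rfl]
  · rw [min_eq_left h.le]

lemma stronglyAdapted_floorHugger : StronglyAdapted filtrationMinSucc (floorHugger f g) := by
  intro n
  have : floorHugger f g n = floorHugger f g n ∘ (min · (n + 1 : ℕ∞)) :=
    funext fun t ↦ (floorHugger_min_succ n t).symm
  rw [this]
  exact (measurable_from_top.comp (comap_measurable _)).stronglyMeasurable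

lemma finite_range_floorHugger (n : ℕ) : (range (floorHugger f g n)).Finite :=
  ((finite_Iic n).image g |>.insert (-f n)).subset <| by
    rintro _ ⟨t, rfl⟩
    unfold floorHugger
    split_ifs with h
    · exact Or.inr ⟨t.toNat, ENat.toNat_le_of_le_natCast h, rfl⟩
    · exact Or.inl rfl

lemma integrable_floorHugger {μ : Measure ℕ∞} [IsFiniteMeasure μ] (n : ℕ) :
    Integrable (floorHugger f g n) μ := by
  obtain ⟨C, hC⟩ := ((finite_range_floorHugger n).image (‖·‖)).bddAbove
  exact .of_bound (measurable_of_countable _).aestronglyMeasurable C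
    (ae_of_all _ fun t ↦ hC ⟨_, ⟨t, rfl⟩, rfl⟩)

variable (S : SurvivalFunction)

lemma setIntegral_floorHugger_Ici_succ (n : ℕ) :
    ∫ t in Ici (n + 1 : ℕ∞), floorHugger f g n t ∂S.law = -f n * S (n + 1) := by
  rw [setIntegral_congr_fun (s := Ici (n + 1 : ℕ∞)) (g := fun _ ↦ -f n) .of_discrete
      fun t ht ↦ floorHugger_of_succ_le ht,
    setIntegral_const, smul_eq_mul, mul_comm, ← Nat.cast_succ, S.law_real_Ici]

lemma setIntegral_floorHugger_Ici (n : ℕ) :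
    ∫ t in Ici (n : ℕ∞), floorHugger f g n t ∂S.law =
      g n * (S n - S (n + 1)) - f n * S (n + 1) := by
  have hsplit : Ici (n : ℕ∞) = {(n : ℕ∞)} ∪ Ici (n + 1 : ℕ∞) := by
    ext t
    rw [mem_union, mem_singleton_iff, mem_Ici, mem_Ici,
      ENat.add_one_le_iff (ENat.natCast_ne_top n), le_iff_eq_or_lt, eq_comm]
  rw [hsplit, setIntegral_union (disjoint_singleton_left.2 fun h ↦ ?_) .of_discrete
      (integrable_floorHugger n).integrableOn (integrable_floorHugger n).integrableOn,
    integral_singleton, floorHugger_natCast_of_le le_rfl, S.law_real_singleton,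
    setIntegral_floorHugger_Ici_succ]
  · simp only [SurvivalFunction.weight_natCast, smul_eq_mul]
    ring
  · exact (ENat.add_one_le_iff (ENat.natCast_ne_top n)).1 h |>.false

theorem martingale_floorHugger
    (hS : ∀ n, S (n + 2) * (g (n + 1) + f (n + 1)) = S (n + 1) * (g (n + 1) + f n)) :
    Martingale (floorHugger f g) filtrationMinSucc S.law := by
  refine martingale_of_setIntegral_eq_succ stronglyAdapted_floorHugger
    (fun n ↦ integrable_floorHugger n) fun n s hs ↦ ?_
  refine setIntegral_eq_of_eqOn_compl_of_atom (integrable_floorHugger n) (integrable_floorHugger _)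
    .of_discrete .of_discrete (Ici_subset_or_disjoint_of_measurableSet_filtrationMinSucc hs)
    (fun t ht ↦ ?_) ?_
  · have htn : t ≤ n := not_lt.1 fun h ↦ ht ((ENat.add_one_le_iff (ENat.natCast_ne_top n)).2 h)
    have htn' : t ≤ (n + 1 : ℕ) := htn.trans (by exact_mod_cast n.le_succ)
    simp only [floorHugger, if_pos htn, if_pos htn']
  · rw [setIntegral_floorHugger_Ici_succ, ← Nat.cast_succ, setIntegral_floorHugger_Ici]
    linear_combination hS n

lemma integral_floorHugger_zero :
    ∫ t, floorHugger f g 0 t ∂S.law = g 0 * (1 - S 1) - f 0 * S 1 := by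
  simpa [S.map_zero] using setIntegral_floorHugger_Ici (f := f) (g := g) S 0

lemma neg_le_floorHugger (hf : Monotone f) (hfg : ∀ n, -f n ≤ g n) (n : ℕ) (t : ℕ∞) :
    -f n ≤ floorHugger f g n t := by
  unfold floorHugger
  split_ifs with h
  · linarith [hfg t.toNat, hf (ENat.toNat_le_of_le_natCast h)]
  · rfl

lemma setOf_exists_le_floorHugger (hfg : ∀ n, -f n < g n) :
    {t | ∃ n, g n ≤ floorHugger f g n t} = {⊤}ᶜ := by
  ext t
  induction t using ENat.recTopCoe with
  | top => simpa [floorHugger] using fun n ↦ hfg n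
  | coe k => simpa using ⟨k, (floorHugger_natCast_of_le le_rfl).ge⟩

end FloorHugger

/-- **Tightness of the generalised Ville inequality** (Theorem 2(b)): for every
`m ∈ [-f 0, g 0]` there is a martingale (the "floor hugger") bounded below by
`-f`, with initial mean `m`, attaining the bound with equality. -/
theorem generalised_villes_inequality_tight (f g : ℕ → ℝ)
    (hf : Monotone f) (hg : Monotone g) (h0 : -f 0 < g 0)
    (m : ℝ) (hm : m ∈ Set.Icc (-f 0) (g 0)) :
    ∃ (Ω : Type) (mΩ : MeasurableSpace Ω) (μ : @Measure Ω mΩ)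
      (_ : IsProbabilityMeasure μ) (𝒢 : Filtration ℕ mΩ) (M : ℕ → Ω → ℝ),
      Martingale M 𝒢 μ ∧
      (∀ n, ∀ᵐ ω ∂μ, -f n ≤ M n ω) ∧
      (∫ ω, M 0 ω ∂μ) = m ∧
      (μ {ω | ∃ n, g n ≤ M n ω}).toReal =
        1 - ((g 0 - m) / (g 0 + f 0)) *
          ∏' n : ℕ, ((g (n + 1) + f n) / (g (n + 1) + f (n + 1))) := by
  obtain ⟨hm₁, hm₂⟩ := hm
  have hfg (n : ℕ) : -f n < g n := by linarith [hf (Nat.zero_le n), hg (Nat.zero_le n)]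
  have hden (n : ℕ) : 0 < g n + f n := by linarith [hfg n]
  have hc : (g 0 - m) / (g 0 + f 0) ∈ Icc 0 1 :=
    ⟨div_nonneg (by linarith) (hden 0).le, div_le_one_of_le₀ (by linarith) (hden 0).le⟩
  have ha (k : ℕ) : (g (k + 1) + f k) / (g (k + 1) + f (k + 1)) ∈ Icc 0 1 :=
    ⟨div_nonneg (by linarith [hg k.le_succ, hfg k]) (hden _).le,
      div_le_one_of_le₀ (by linarith [hf k.le_succ]) (hden _).le⟩
  set S := SurvivalFunction.ofFactors _ _ hc ha
  refine ⟨ℕ∞, inferInstance, S.law, inferInstance, filtrationMinSucc, floorHugger f g,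
    martingale_floorHugger S fun n ↦ ?_,
    fun n ↦ ae_of_all _ (neg_le_floorHugger hf (fun k ↦ (hfg k).le) n), ?_, ?_⟩
  · rw [SurvivalFunction.ofFactors_succ_succ, mul_assoc, div_mul_cancel₀ _ (hden (n + 1)).ne']
  · rw [integral_floorHugger_zero, SurvivalFunction.ofFactors_one]
    field_simp [(hden 0).ne']
    ring
  · rw [← measureReal_def, setOf_exists_le_floorHugger hfg, probReal_compl_eq_one_sub .of_discrete,
      S.law_real_singleton]
    rfl
end

section
/- Let f, g : [0,∞) → [0,∞) be increasing with f differentiable, and suppose their restrictions to {0,1,2,...} satisfy -f(0) < g(0). Let (M_n)_{n ≥ 0} be a supermartingale bounded below by M_n ≥ -f(n) for all integers n ≥ 0, with E[M_0] ∈ [-f(0), g(0)]. Then P(∃ n ≥ 0 : M_n ≥ g(n)) ≤ 1 - ((g(0) - E[M_0])/(g(0) + f(0))) · exp(-∫_0^∞ f'(t)/(g(t)+f(t)) dt). -/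
/-!
Choose deterministic weights `c n > 0` (`villeWeight`) with
`c (n+1) (g (n+1) + f n) = c n (g n + f n)`. Since `g` increases they decrease, and writing
`c n (M n - g n) = c n (M n + f n) - c n (g n + f n)` with `M n + f n ≥ 0` shows that
`c n (M n - g n)` is again a supermartingale. It is nonnegative exactly when `M` has crossed `g`,
and at time `N` it is at least `-c N (g N + f N)`, so optional stopping at the first crossing
bounds the probability of a crossing before `N` by `1 - (g 0 - E M 0) / ((g 0 + f 0) D N)`, where
`D N = c N (g N + f N) / (c 0 (g 0 + f 0))` is the product of the ratios
`(g k + f k) / (g k + f (k-1))`. The logarithm of each ratio is at most `∫_{k-1}^k f' / (g + f)`.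
-/

open MeasureTheory Filter Finset

noncomputable def villeGrowth (f g : ℕ → ℝ) (n : ℕ) : ℝ :=
  ∏ k ∈ range n, (g (k + 1) + f (k + 1)) / (g (k + 1) + f k)

noncomputable def villeWeight (f g : ℕ → ℝ) (n : ℕ) : ℝ :=
  villeGrowth f g n / (g n + f n)

section VilleWeight

variable {f g : ℕ → ℝ}

theorem villeGrowth_pos (hg : Monotone g) (hpos : ∀ n, 0 < g n + f n) (n : ℕ) :
    0 < villeGrowth f g n :=
  prod_pos fun k _ => div_pos (hpos (k + 1)) (by linarith [hpos k, hg k.le_succ])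

theorem villeWeight_pos (hg : Monotone g) (hpos : ∀ n, 0 < g n + f n) (n : ℕ) :
    0 < villeWeight f g n :=
  div_pos (villeGrowth_pos hg hpos n) (hpos n)

theorem villeWeight_mul (hpos : ∀ n, 0 < g n + f n) (n : ℕ) :
    villeWeight f g n * (g n + f n) = villeGrowth f g n :=
  div_mul_cancel₀ _ (hpos n).ne'

theorem villeWeight_succ_mul (hg : Monotone g) (hpos : ∀ n, 0 < g n + f n) (n : ℕ) :
    villeWeight f g (n + 1) * (g (n + 1) + f n) = villeGrowth f g n := by
  have hden : 0 < g (n + 1) + f n := by linarith [hpos n, hg n.le_succ]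
  rw [villeWeight, villeGrowth, prod_range_succ, ← villeGrowth]
  field_simp [(hpos (n + 1)).ne', hden.ne']

theorem villeWeight_succ_le (hg : Monotone g) (hpos : ∀ n, 0 < g n + f n) (n : ℕ) :
    villeWeight f g (n + 1) ≤ villeWeight f g n := by
  refine le_of_mul_le_mul_right ?_ (show 0 < g (n + 1) + f n by linarith [hpos n, hg n.le_succ])
  calc villeWeight f g (n + 1) * (g (n + 1) + f n) = villeWeight f g n * (g n + f n) := by
        rw [villeWeight_succ_mul hg hpos, villeWeight_mul hpos]
    _ ≤ villeWeight f g n * (g (n + 1) + f n) := by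
        gcongr
        · exact (villeWeight_pos hg hpos n).le
        · exact hg n.le_succ

theorem villeWeight_succ_mul_sub_le (hg : Monotone g) (hpos : ∀ n, 0 < g n + f n) {n : ℕ}
    {x : ℝ} (hx : -f n ≤ x) :
    villeWeight f g (n + 1) * (x - g (n + 1)) ≤ villeWeight f g n * (x - g n) := by
  have h := villeWeight_succ_mul hg hpos n
  rw [← villeWeight_mul hpos n] at h
  nlinarith [mul_le_mul_of_nonneg_right (villeWeight_succ_le hg hpos n)
    (neg_le_iff_add_nonneg.1 hx)]

end VilleWeight

namespace MeasureTheory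

variable {Ω : Type*} {mΩ : MeasurableSpace Ω} {μ : Measure Ω} {𝒢 : Filtration ℕ mΩ}
  {M : ℕ → Ω → ℝ} {f g : ℕ → ℝ}

section FiniteMeasure

variable [IsFiniteMeasure μ]

theorem Supermartingale.mul_sub_of_le {c a : ℕ → ℝ} (hM : Supermartingale M 𝒢 μ)
    (hc : ∀ n, 0 ≤ c n)
    (hstep : ∀ n, ∀ᵐ ω ∂μ, c (n + 1) * (M n ω - a (n + 1)) ≤ c n * (M n ω - a n)) :
    Supermartingale (fun n ω => c n * (M n ω - a n)) 𝒢 μ := by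
  refine supermartingale_nat (fun n => stronglyMeasurable_const.mul
    ((hM.1 n).sub stronglyMeasurable_const)) (fun n => ((hM.integrable n).sub
      (integrable_const _)).const_mul _) fun n => ?_
  have hcond : μ[fun ω => c (n + 1) * (M (n + 1) ω - a (n + 1)) | 𝒢 n] =ᵐ[μ]
      fun ω => c (n + 1) * (μ[M (n + 1) | 𝒢 n] ω - a (n + 1)) := by
    filter_upwards [condExp_smul (c (n + 1)) (M (n + 1) - fun _ => a (n + 1)) (𝒢 n),
      condExp_sub (hM.integrable (n + 1)) (integrable_const (a (n + 1))) (𝒢 n)]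
      with ω hsmul hsub
    rw [condExp_const (𝒢.le n)] at hsub
    exact hsmul.trans (congrArg (c (n + 1) * ·) hsub)
  filter_upwards [hcond, hM.condExp_ae_le (Nat.le_succ n), hstep n] with ω hω hle hstepω
  rw [hω]
  nlinarith [hc (n + 1)]

/-- Off the crossing event the first crossing time is `N`, so nonnegativity is needed only there. -/
theorem Supermartingale.mul_measureReal_exists_le_le_integral {Z : ℕ → Ω → ℝ}
    (hZ : Supermartingale Z 𝒢 μ) {N : ℕ} (hZN : 0 ≤ᵐ[μ] Z N) (ε : ℝ) :
    ε * μ.real {ω | ∃ n ≤ N, ε ≤ Z n ω} ≤ ∫ ω, Z 0 ω ∂μ := by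
  set A := {ω | ∃ n ≤ N, ε ≤ Z n ω}
  let τ : Ω → ℕ∞ := fun ω => (hittingBtwn Z (Set.Ici ε) 0 N ω : ℕ)
  have hτ : IsStoppingTime 𝒢 τ :=
    hZ.stronglyAdapted.adapted.isStoppingTime_hittingBtwn measurableSet_Ici
  have hτN : ∀ ω, τ ω ≤ N := fun ω => WithTop.coe_le_coe.2 (hittingBtwn_le ω)
  have hA : MeasurableSet A := by
    have hA_eq : A = ⋃ n, ⋃ (_ : n ≤ N), {ω | ε ≤ Z n ω} := by ext; simp [A]
    rw [hA_eq]
    exact .iUnion fun n => .iUnion fun _ =>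
      measurableSet_le measurable_const ((hZ.stronglyMeasurable n).measurable.mono (𝒢.le n) le_rfl)
  have hstopped : ∫ ω, stoppedValue Z τ ω ∂μ ≤ ∫ ω, Z 0 ω ∂μ := by
    have := hZ.neg.expected_stoppedValue_mono (isStoppingTime_const 𝒢 0) hτ
      (fun ω => WithTop.coe_le_coe.2 (Nat.zero_le _)) hτN
    simpa [stoppedValue, integral_neg] using this
  have hind : A.indicator (fun _ => ε) ≤ᵐ[μ] stoppedValue Z τ := by
    filter_upwards [hZN] with ω hω
    by_cases hωA : ω ∈ A
    · rw [Set.indicator_of_mem hωA]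
      obtain ⟨n, hnN, hn⟩ := hωA
      exact stoppedValue_hittingBtwn_mem ⟨n, ⟨Nat.zero_le n, hnN⟩, hn⟩
    · have hτω : hittingBtwn Z (Set.Ici ε) 0 N ω = N := by
        rw [hittingBtwn, if_neg]
        rintro ⟨n, hn, hZn⟩
        exact hωA ⟨n, hn.2, hZn⟩
      rw [Set.indicator_of_notMem hωA]
      simpa [stoppedValue, τ, hτω] using hω
  calc ε * μ.real A = ∫ ω, A.indicator (fun _ => ε) ω ∂μ := by
        rw [integral_indicator_const ε hA, smul_eq_mul, mul_comm]
    _ ≤ ∫ ω, stoppedValue Z τ ω ∂μ :=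
        integral_mono_ae ((integrable_const ε).indicator hA)
          (integrable_stoppedValue ℕ hτ hZ.integrable hτN) hind
    _ ≤ ∫ ω, Z 0 ω ∂μ := hstopped

theorem Supermartingale.villeWeight_mul_sub (hM : Supermartingale M 𝒢 μ) (hg : Monotone g)
    (hpos : ∀ n, 0 < g n + f n) (hlb : ∀ n, ∀ᵐ ω ∂μ, -f n ≤ M n ω) :
    Supermartingale (fun n ω => villeWeight f g n * (M n ω - g n)) 𝒢 μ :=
  hM.mul_sub_of_le (fun n => (villeWeight_pos hg hpos n).le) fun n => by
    filter_upwards [hlb n] with ω hω using villeWeight_succ_mul_sub_le hg hpos hω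

theorem measureReal_setOf_exists_le_of_forall {p : ℕ → Ω → Prop} {B : ℝ}
    (h : ∀ N, μ.real {ω | ∃ n ≤ N, p n ω} ≤ B) : μ.real {ω | ∃ n, p n ω} ≤ B := by
  have hB : 0 ≤ B := measureReal_nonneg.trans (h 0)
  have hU : {ω | ∃ n, p n ω} = ⋃ N, {ω | ∃ n ≤ N, p n ω} := by
    ext ω
    simp only [Set.mem_ofPred_eq, Set.mem_iUnion]
    exact ⟨fun ⟨n, hn⟩ => ⟨n, n, le_rfl, hn⟩, fun ⟨_, n, _, hn⟩ => ⟨n, hn⟩⟩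
  have hmono : Monotone fun N => {ω | ∃ n ≤ N, p n ω} :=
    fun _ _ hNM _ ⟨n, hn, hpn⟩ => ⟨n, hn.trans hNM, hpn⟩
  rw [hU, measureReal_def, hmono.measure_iUnion]
  exact ENNReal.toReal_le_of_le_ofReal hB (iSup_le fun N =>
    (ENNReal.le_ofReal_iff_toReal_le (measure_ne_top _ _) hB).2 (h N))

end FiniteMeasure

theorem Supermartingale.villeGrowth_mul_measureReal_exists_le [IsProbabilityMeasure μ]
    (hM : Supermartingale M 𝒢 μ) (hg : Monotone g) (hpos : ∀ n, 0 < g n + f n)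
    (hlb : ∀ n, ∀ᵐ ω ∂μ, -f n ≤ M n ω) (N : ℕ) :
    villeGrowth f g N * μ.real {ω | ∃ n ≤ N, g n ≤ M n ω} ≤
      villeGrowth f g N - (g 0 - ∫ ω, M 0 ω ∂μ) / (g 0 + f 0) := by
  set D := villeGrowth f g N
  have hZ := (hM.villeWeight_mul_sub hg hpos hlb).add_martingale (martingale_const 𝒢 μ D)
  have hZN : 0 ≤ᵐ[μ] fun ω => villeWeight f g N * (M N ω - g N) + D := by
    filter_upwards [hlb N] with ω hω
    have hD := villeWeight_mul hpos N
    have := mul_nonneg (villeWeight_pos hg hpos N).le (neg_le_iff_add_nonneg.1 hω)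
    simp only [Pi.zero_apply]
    linarith
  have hset : {ω | ∃ n ≤ N, g n ≤ M n ω} =
      {ω | ∃ n ≤ N, D ≤ villeWeight f g n * (M n ω - g n) + D} := by
    ext ω
    simp only [Set.mem_ofPred_eq, le_add_iff_nonneg_left,
      mul_nonneg_iff_of_pos_left (villeWeight_pos hg hpos _), sub_nonneg]
  have hZ0 : ∫ ω, villeWeight f g 0 * (M 0 ω - g 0) + D ∂μ =
      D - (g 0 - ∫ ω, M 0 ω ∂μ) / (g 0 + f 0) := by
    have hint : Integrable (fun ω => M 0 ω - g 0) μ := (hM.integrable 0).sub (integrable_const _)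
    have hw0 : villeWeight f g 0 = (g 0 + f 0)⁻¹ := by simp [villeWeight, villeGrowth]
    rw [integral_add (hint.const_mul _) (integrable_const D), integral_const_mul,
      integral_sub (hM.integrable 0) (integrable_const _), integral_const, integral_const,
      probReal_univ, one_smul, one_smul, hw0]
    ring
  rw [hset, ← hZ0]
  exact hZ.mul_measureReal_exists_le_le_integral hZN D

end MeasureTheory

theorem HasDerivAt.nonneg_of_monotoneOn_Ici {f : ℝ → ℝ} {f' a t : ℝ} (hd : HasDerivAt f f' t)
    (hf : MonotoneOn f (Set.Ici a)) (ht : a ≤ t) : 0 ≤ f' := by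
  refine (hd.hasDerivWithinAt (s := Set.Ioi t)).nonneg_of_monotoneOn ?_
    (hf.mono fun _ hs => ht.trans (le_of_lt hs))
  rw [accPt_principal_iff_nhdsWithin, Set.sdiff_singleton_eq_self Set.self_notMem_Ioi]
  infer_instance

section LogBarrier

variable {f g f' : ℝ → ℝ} {a b : ℝ}

/-- `log (g b + f)` has derivative `f' / (g b + f) ≤ f' / (g + f)` on `[a, b]`. -/
theorem ofReal_log_sub_log_le_lintegral (hab : a ≤ b) (hg : MonotoneOn g (Set.Icc a b))
    (hf' : ∀ t ∈ Set.Icc a b, HasDerivAt f (f' t) t) (hf'_nonneg : ∀ t ∈ Set.Icc a b, 0 ≤ f' t)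
    (hpos : ∀ t ∈ Set.Icc a b, 0 < g t + f t) :
    ENNReal.ofReal (Real.log (g b + f b) - Real.log (g b + f a)) ≤
      ∫⁻ t in Set.Ioc a b, ENNReal.ofReal (f' t / (g t + f t)) := by
  have hgb : ∀ t ∈ Set.Icc a b, g t ≤ g b := fun t ht => hg ht (Set.right_mem_Icc.2 hab) ht.2
  have hposb : ∀ t ∈ Set.Icc a b, 0 < g b + f t := fun t ht => by linarith [hpos t ht, hgb t ht]
  have hderiv : ∀ t ∈ Set.Icc a b,
      HasDerivAt (fun u => Real.log (g b + f u)) (f' t / (g b + f t)) t :=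
    fun t ht => ((hf' t ht).const_add (g b)).log (hposb t ht).ne'
  have hnonneg : ∀ t ∈ Set.Icc a b, 0 ≤ f' t / (g b + f t) :=
    fun t ht => div_nonneg (hf'_nonneg t ht) (hposb t ht).le
  have hint : IntegrableOn (fun t => f' t / (g b + f t)) (Set.Ioc a b) := by
    rw [← intervalIntegrable_iff_integrableOn_Ioc_of_le hab]
    refine intervalIntegral.intervalIntegrable_deriv_of_nonneg (g := fun u => Real.log (g b + f u))
      ?_ ?_ ?_
    · rw [Set.uIcc_of_le hab]
      exact fun t ht => (hderiv t ht).continuousAt.continuousWithinAt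
    · rw [min_eq_left hab, max_eq_right hab]
      exact fun t ht => hderiv t (Set.Ioo_subset_Icc_self ht)
    · rw [min_eq_left hab, max_eq_right hab]
      exact fun t ht => hnonneg t (Set.Ioo_subset_Icc_self ht)
  have hFTC : ∫ t in Set.Ioc a b, f' t / (g b + f t) =
      Real.log (g b + f b) - Real.log (g b + f a) := by
    rw [← intervalIntegral.integral_of_le hab]
    exact intervalIntegral.integral_eq_sub_of_hasDerivAt
      (fun t ht => hderiv t (by rwa [Set.uIcc_of_le hab] at ht))
      ((intervalIntegrable_iff_integrableOn_Ioc_of_le hab).2 hint)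
  rw [← hFTC, ofReal_integral_eq_lintegral_ofReal hint
    ((ae_restrict_mem measurableSet_Ioc).mono fun t ht => hnonneg t (Set.Ioc_subset_Icc_self ht))]
  refine setLIntegral_mono' measurableSet_Ioc fun t ht => ENNReal.ofReal_le_ofReal ?_
  have ht' := Set.Ioc_subset_Icc_self ht
  exact div_le_div_of_nonneg_left (hf'_nonneg t ht') (hpos t ht') (by linarith [hgb t ht'])

theorem ofReal_log_villeGrowth_le_lintegral (hf : MonotoneOn f (Set.Ici 0))
    (hg : MonotoneOn g (Set.Ici 0)) (hf' : ∀ t, 0 ≤ t → HasDerivAt f (f' t) t)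
    (hpos : ∀ t, 0 ≤ t → 0 < g t + f t) (N : ℕ) :
    ENNReal.ofReal (Real.log (villeGrowth (fun n => f n) (fun n => g n) N)) ≤
      ∫⁻ t in Set.Ioi 0, ENNReal.ofReal (f' t / (g t + f t)) := by
  have hposN : ∀ k : ℕ, 0 < g (k + 1 : ℕ) + f k := fun k => by
    have := hg (Set.mem_Ici.2 (Nat.cast_nonneg (α := ℝ) k))
      (Set.mem_Ici.2 (Nat.cast_nonneg (k + 1))) (by simp)
    linarith [hpos k (Nat.cast_nonneg k)]
  have hlog : Real.log (villeGrowth (fun n => f n) (fun n => g n) N) =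
      ∑ k ∈ range N,
        (Real.log (g (k + 1 : ℕ) + f (k + 1 : ℕ)) - Real.log (g (k + 1 : ℕ) + f k)) := by
    rw [villeGrowth, Real.log_prod fun k _ => (div_pos (hpos _ (Nat.cast_nonneg _)) (hposN k)).ne']
    refine sum_congr rfl fun k _ => Real.log_div (hpos _ (Nat.cast_nonneg _)).ne' (hposN k).ne'
  have hstep : ∀ k : ℕ, ENNReal.ofReal
      (Real.log (g (k + 1 : ℕ) + f (k + 1 : ℕ)) - Real.log (g (k + 1 : ℕ) + f k)) ≤
      ∫⁻ t in Set.Ioc (k : ℝ) (k + 1 : ℕ), ENNReal.ofReal (f' t / (g t + f t)) := fun k => by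
    have hsub : Set.Icc (k : ℝ) (k + 1 : ℕ) ⊆ Set.Ici 0 :=
      fun t ht => (Nat.cast_nonneg k).trans ht.1
    exact ofReal_log_sub_log_le_lintegral (by simp) (hg.mono hsub) (fun t ht => hf' t (hsub ht))
      (fun t ht => (hf' t (hsub ht)).nonneg_of_monotoneOn_Ici hf (hsub ht))
      (fun t ht => hpos t (hsub ht))
  have hdisj : Set.PairwiseDisjoint (↑(range N)) fun k : ℕ => Set.Ioc (k : ℝ) (k + 1 : ℕ) := by
    intro i _ j _ hij
    simpa using Set.pairwise_disjoint_Ioc_intCast ℝ (Nat.cast_injective.ne hij : (i : ℤ) ≠ j)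
  calc ENNReal.ofReal (Real.log (villeGrowth (fun n => f n) (fun n => g n) N))
      ≤ ∑ k ∈ range N, ENNReal.ofReal
          (Real.log (g (k + 1 : ℕ) + f (k + 1 : ℕ)) - Real.log (g (k + 1 : ℕ) + f k)) := by
        rw [hlog]
        exact le_sum_of_subadditive _ ENNReal.ofReal_zero.le (fun _ _ => ENNReal.ofReal_add_le) _ _
    _ ≤ ∑ k ∈ range N, ∫⁻ t in Set.Ioc (k : ℝ) (k + 1 : ℕ), ENNReal.ofReal (f' t / (g t + f t)) :=
        sum_le_sum fun k _ => hstep k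
    _ = ∫⁻ t in ⋃ k ∈ range N, Set.Ioc (k : ℝ) (k + 1 : ℕ), ENNReal.ofReal (f' t / (g t + f t)) :=
        (lintegral_biUnion_finset hdisj (fun _ _ => measurableSet_Ioc) _).symm
    _ ≤ ∫⁻ t in Set.Ioi 0, ENNReal.ofReal (f' t / (g t + f t)) :=
        lintegral_mono_set (Set.iUnion₂_subset fun k _ t ht => (Nat.cast_nonneg k).trans_lt ht.1)

end LogBarrier

open scoped Classical in
theorem ite_exp_neg_toReal_le_inv {x : ℝ} {T : ENNReal} (hx : 0 < x)
    (hT : ENNReal.ofReal (Real.log x) ≤ T) :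
    (if T = ⊤ then 0 else Real.exp (-T.toReal)) ≤ x⁻¹ := by
  split_ifs with hT_top
  · positivity
  · rw [← Real.exp_log hx, ← Real.exp_neg]
    exact Real.exp_le_exp.2 (neg_le_neg ((ENNReal.ofReal_le_iff_le_toReal hT_top).1 hT))

open scoped Classical in
theorem continuous_generalised_ville_general {Ω : Type*} {mΩ : MeasurableSpace Ω}
    {μ : Measure Ω} [IsProbabilityMeasure μ] {𝒢 : Filtration ℕ mΩ}
    {M : ℕ → Ω → ℝ} {f g f' : ℝ → ℝ}
    (hf_mono : StrictMonoOn f (Set.Ici 0)) (hg_mono : StrictMonoOn g (Set.Ici 0))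
    (hf' : ∀ t, 0 ≤ t → HasDerivAt f (f' t) t)
    (h0 : -f 0 < g 0)
    (hM : Supermartingale M 𝒢 μ)
    (hlb : ∀ n : ℕ, ∀ᵐ ω ∂μ, -f n ≤ M n ω)
    (hinit : (∫ ω, M 0 ω ∂μ) ∈ Set.Icc (-f 0) (g 0)) :
    (μ {ω | ∃ n : ℕ, g n ≤ M n ω}).toReal ≤
      1 - ((g 0 - ∫ ω, M 0 ω ∂μ) / (g 0 + f 0)) *
        (if (∫⁻ t in Set.Ioi (0 : ℝ), ENNReal.ofReal (f' t / (g t + f t))) = ⊤ then 0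
         else Real.exp
           (-(∫⁻ t in Set.Ioi (0 : ℝ), ENNReal.ofReal (f' t / (g t + f t))).toReal)) := by
  have hpos : ∀ t, 0 ≤ t → 0 < g t + f t := fun t ht => by
    linarith [hf_mono.monotoneOn Set.self_mem_Ici ht ht, hg_mono.monotoneOn Set.self_mem_Ici ht ht]
  have hgN : Monotone fun n : ℕ => g n := fun i j hij =>
    hg_mono.monotoneOn (Set.mem_Ici.2 i.cast_nonneg) (Set.mem_Ici.2 j.cast_nonneg) (by simpa)
  have hposN : ∀ n : ℕ, 0 < g n + f n := fun n => hpos n n.cast_nonneg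
  have hdeficit : 0 ≤ (g 0 - ∫ ω, M 0 ω ∂μ) / (g 0 + f 0) :=
    div_nonneg (by linarith [hinit.2]) (hpos 0 le_rfl).le
  refine measureReal_setOf_exists_le_of_forall fun N => ?_
  have hD := villeGrowth_pos hgN hposN N
  have hville := hM.villeGrowth_mul_measureReal_exists_le hgN hposN hlb N
  have hexp := ite_exp_neg_toReal_le_inv hD
    (ofReal_log_villeGrowth_le_lintegral hf_mono.monotoneOn hg_mono.monotoneOn hf' hpos N)
  simp only [Nat.cast_zero] at hville
  calc μ.real {ω | ∃ n ≤ N, g n ≤ M n ω}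
      ≤ 1 - (g 0 - ∫ ω, M 0 ω ∂μ) / (g 0 + f 0) *
          (villeGrowth (fun n => f n) (fun n => g n) N)⁻¹ := by
        rw [← mul_le_mul_iff_right₀ hD]
        field_simp
        linarith
    _ ≤ _ := by gcongr

open scoped Classical in
/-- **Continuous-form generalised Ville inequality** (Corollary 3): for
increasing `f, g : [0,∞) → [0,∞)` with `f` differentiable, a supermartingale
bounded below by `-f` crosses `g` with probability at most
`1 - ((g 0 - E[M 0])/(g 0 + f 0)) · exp(-∫_0^∞ f'(t)/(g t + f t) dt)`,
where the exponential is interpreted as `0` if the integral is infinite. -/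
theorem continuous_generalised_ville {Ω : Type*} {mΩ : MeasurableSpace Ω}
    {μ : Measure Ω} [IsProbabilityMeasure μ] {𝒢 : Filtration ℕ mΩ}
    {M : ℕ → Ω → ℝ} {f g f' : ℝ → ℝ}
    (hf_mono : StrictMonoOn f (Set.Ici 0)) (hg_mono : StrictMonoOn g (Set.Ici 0))
    (hf_nonneg : ∀ t, 0 ≤ t → 0 ≤ f t) (hg_nonneg : ∀ t, 0 ≤ t → 0 ≤ g t)
    (hf' : ∀ t, 0 ≤ t → HasDerivAt f (f' t) t)
    (h0 : -f 0 < g 0)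
    (hM : Supermartingale M 𝒢 μ)
    (hlb : ∀ n : ℕ, ∀ᵐ ω ∂μ, -f n ≤ M n ω)
    (hinit : (∫ ω, M 0 ω ∂μ) ∈ Set.Icc (-f 0) (g 0)) :
    (μ {ω | ∃ n : ℕ, g n ≤ M n ω}).toReal ≤
      1 - ((g 0 - ∫ ω, M 0 ω ∂μ) / (g 0 + f 0)) *
        (if (∫⁻ t in Set.Ioi (0 : ℝ), ENNReal.ofReal (f' t / (g t + f t))) = ⊤ then 0
         else Real.exp
           (-(∫⁻ t in Set.Ioi (0 : ℝ), ENNReal.ofReal (f' t / (g t + f t))).toReal)) :=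
  continuous_generalised_ville_general hf_mono hg_mono hf' h0 hM hlb hinit
end

section
/- Define I(x) = ∫_0^x e^{u²/2} · erf(u/√2) du. Let τ > 0 and let x be a real number with I(x) ≤ τ. Then |x| ≤ √(2·ln(1+√2·τ)) + R(τ), where R(τ) = [τ·(1 - √( (τ/(τ+2√2)) · (1/ln(1+√2·τ)) ))] / [ (1/(2·ln(1+√2·τ))) · ( (1+√2·τ)·(2·ln(1+√2·τ) - 1) + ln(1+√2·τ) + 1 ) · √(τ/(τ+2√2)) ]. -/
open MeasureTheory Real

/-- The Gauss error function `erf z = (2/√π) ∫_0^z e^{-t²} dt`. -/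
noncomputable def erf (z : ℝ) : ℝ := (2 / Real.sqrt π) * ∫ t in (0 : ℝ)..z, Real.exp (-t ^ 2)

/-- The function `I x = ∫_0^x e^{u²/2} erf(u/√2) du`. -/
noncomputable def I (x : ℝ) : ℝ :=
  ∫ u in (0 : ℝ)..x, Real.exp (u ^ 2 / 2) * erf (u / Real.sqrt 2)

/-!
The integrand `e^{u²/2} erf (u/√2)` of `I` is odd and increasing on `[0, ∞)`. Split `I |x|`
at `a = √(2 log (1 + √2 τ))`, where `e^{a²/2} = 1 + √2 τ`: on `[a, |x|]` the integrand is at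
least its value at `a`, and on `[0, a]`, since `erf` is concave on `[0, ∞)` and vanishes at `0`,
it is at least `(u/a) e^{u²/2} erf (a/√2)`, which integrates to `erf (a/√2) (e^{a²/2} - 1) / a`.
Both terms are controlled by `erf (a/√2)² ≥ 1 - e^{-a²/2} = √2 τ / (1 + √2 τ)`.

That lower bound `erf z ² ≥ 1 - e^{-z²}` holds because the difference `k` vanishes at `0` and
at `∞`, while `k' = 2 e^{-z²} (2 erf z / √π - z)` with a concave second factor vanishing at `0`:
so `k` first increases and then decreases.
-/
open Set Filter Topology

theorem ConcaveOn.mul_le_map_mul {f : ℝ → ℝ} (hf : ConcaveOn ℝ (Ici 0) f) (h0 : f 0 = 0)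
    {c w : ℝ} (hc₀ : 0 ≤ c) (hc₁ : c ≤ 1) (hw : 0 ≤ w) : c * f w ≤ f (c * w) := by
  simpa [h0] using hf.2 (mem_Ici.2 le_rfl) (mem_Ici.2 hw) (sub_nonneg.2 hc₁) hc₀ (by ring)

theorem ConcaveOn.neg_of_le_of_neg {f : ℝ → ℝ} (hf : ConcaveOn ℝ (Ici 0) f) (h0 : f 0 = 0)
    {w v : ℝ} (hw : 0 ≤ w) (hwv : w ≤ v) (hfw : f w < 0) : f v < 0 := by
  have hw₀ : 0 < w := hw.lt_of_ne (by rintro rfl; exact hfw.ne h0)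
  have hv : 0 < v := hw₀.trans_le hwv
  have h := hf.mul_le_map_mul h0 (div_nonneg hw hv.le) ((div_le_one hv).2 hwv) hv.le
  rw [div_mul_cancel₀ w hv.ne'] at h
  exact neg_of_mul_neg_right (h.trans_lt hfw) (div_nonneg hw hv.le)

theorem nonneg_of_tendsto_zero_of_deriv_neg_imp {f f' : ℝ → ℝ}
    (hf : ∀ z, HasDerivAt f (f' z) z) (h0 : 0 ≤ f 0) (hlim : Tendsto f atTop (𝓝 0))
    (hf' : ∀ w v, 0 ≤ w → w ≤ v → f' w < 0 → f' v ≤ 0) {z : ℝ} (hz : 0 ≤ z) : 0 ≤ f z := by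
  have hcont : Continuous f := continuous_iff_continuousAt.2 fun x => (hf x).continuousAt
  by_cases hpos : ∀ w ∈ Icc 0 z, 0 ≤ f' w
  · have hmono : MonotoneOn f (Icc 0 z) :=
      monotoneOn_of_hasDerivWithinAt_nonneg (convex_Icc 0 z) hcont.continuousOn
        (fun x _ => (hf x).hasDerivWithinAt) fun x hx => hpos x (interior_subset hx)
    exact h0.trans (hmono (left_mem_Icc.2 hz) (right_mem_Icc.2 hz) hz)
  · push Not at hpos
    obtain ⟨w, ⟨hw, hwz⟩, hfw⟩ := hpos
    have hanti : AntitoneOn f (Ici z) :=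
      antitoneOn_of_hasDerivWithinAt_nonpos (convex_Ici z) hcont.continuousOn
        (fun x _ => (hf x).hasDerivWithinAt)
        fun v hv => hf' w v hw (hwz.trans (interior_subset hv)) hfw
    exact le_of_tendsto hlim <| (eventually_ge_atTop z).mono fun v hv =>
      hanti (mem_Ici.2 le_rfl) (mem_Ici.2 hv) hv

theorem hasDerivAt_erf (z : ℝ) : HasDerivAt erf (2 / √π * exp (-z ^ 2)) z := by
  have hcont : Continuous fun t : ℝ => exp (-t ^ 2) := by fun_prop
  exact (hcont.integral_hasStrictDerivAt 0 z).hasDerivAt.const_mul _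

@[fun_prop]
theorem continuous_erf : Continuous erf :=
  continuous_iff_continuousAt.2 fun z => (hasDerivAt_erf z).continuousAt

@[simp] theorem erf_zero : erf 0 = 0 := by simp [erf]

theorem erf_neg (z : ℝ) : erf (-z) = -erf z := by
  have h := intervalIntegral.integral_comp_neg (a := 0) (b := z) fun t : ℝ => exp (-t ^ 2)
  simp only [neg_sq, neg_zero] at h
  rw [erf, erf, h, intervalIntegral.integral_symm 0 (-z)]
  ring

theorem monotone_erf : Monotone erf :=
  monotone_of_hasDerivAt_nonneg hasDerivAt_erf fun z => by positivity

theorem erf_nonneg {z : ℝ} (hz : 0 ≤ z) : 0 ≤ erf z := erf_zero ▸ monotone_erf hz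

theorem concaveOn_erf : ConcaveOn ℝ (Ici 0) erf := by
  refine AntitoneOn.concaveOn_of_deriv (convex_Ici 0) continuous_erf.continuousOn
    (fun z _ => (hasDerivAt_erf z).differentiableAt.differentiableWithinAt) ?_
  intro u hu v _ huv
  rw [interior_Ici, mem_Ioi] at hu
  rw [(hasDerivAt_erf u).deriv, (hasDerivAt_erf v).deriv]
  gcongr

theorem tendsto_erf_atTop : Tendsto erf atTop (𝓝 1) := by
  have hint : IntegrableOn (fun t : ℝ => exp (-t ^ 2)) (Ioi 0) := by
    simpa using (integrable_exp_neg_mul_sq one_pos).integrableOn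
  have hval : ∫ t in Ioi (0 : ℝ), exp (-t ^ 2) = √π / 2 := by
    simpa using integral_gaussian_Ioi 1
  have h := (intervalIntegral_tendsto_integral_Ioi 0 hint tendsto_id).const_mul (2 / √π)
  rwa [hval, div_mul_div_cancel₀', div_self (sqrt_pos.2 pi_pos).ne'] at h
  exact two_ne_zero

theorem tendsto_exp_neg_sq_atTop : Tendsto (fun z : ℝ => exp (-z ^ 2)) atTop (𝓝 0) :=
  tendsto_exp_atBot.comp <| tendsto_neg_atTop_atBot.comp <| tendsto_pow_atTop two_ne_zero

theorem one_sub_exp_neg_sq_le_erf_sq {z : ℝ} (hz : 0 ≤ z) : 1 - exp (-z ^ 2) ≤ erf z ^ 2 := by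
  set φ : ℝ → ℝ := fun z => 2 / √π * erf z - z
  have hφ : ConcaveOn ℝ (Ici 0) φ :=
    (concaveOn_erf.smul (by positivity : (0 : ℝ) ≤ 2 / √π)).sub (convexOn_id (convex_Ici 0))
  have hderiv (z : ℝ) : HasDerivAt (fun z => erf z ^ 2 - (1 - exp (-z ^ 2)))
      (2 * exp (-z ^ 2) * φ z) z := by
    refine (((hasDerivAt_erf z).fun_pow 2).fun_sub
      ((hasDerivAt_pow 2 z).fun_neg.exp.const_sub 1)).congr_deriv ?_
    simp only [φ]
    ring
  have hlim : Tendsto (fun z => erf z ^ 2 - (1 - exp (-z ^ 2))) atTop (𝓝 0) := by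
    simpa using (tendsto_erf_atTop.pow 2).sub (tendsto_exp_neg_sq_atTop.const_sub 1)
  suffices 0 ≤ erf z ^ 2 - (1 - exp (-z ^ 2)) by linarith
  refine nonneg_of_tendsto_zero_of_deriv_neg_imp hderiv (by simp) hlim ?_ hz
  intro w v hw hwv hw'
  have hφv : φ v < 0 :=
    hφ.neg_of_le_of_neg (by simp [φ]) hw hwv (neg_of_mul_neg_right hw' (by positivity))
  exact mul_nonpos_of_nonneg_of_nonpos (by positivity) hφv.le

theorem sqrt_div_one_add_le_erf_sqrt_log {s : ℝ} (hs : 0 ≤ s) :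
    √(s / (1 + s)) ≤ erf √(log (1 + s)) := by
  have h1s : 0 < 1 + s := by linarith
  have h := one_sub_exp_neg_sq_le_erf_sq (sqrt_nonneg (log (1 + s)))
  rw [sq_sqrt (log_nonneg (by linarith)), exp_neg, exp_log h1s] at h
  calc √(s / (1 + s)) = √(1 - (1 + s)⁻¹) := by congr 1; field_simp; ring
    _ ≤ √(erf √(log (1 + s)) ^ 2) := sqrt_le_sqrt h
    _ = erf √(log (1 + s)) := sqrt_sq (erf_nonneg (sqrt_nonneg _))

theorem continuous_I_integrand : Continuous fun u : ℝ => exp (u ^ 2 / 2) * erf (u / √2) := by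
  fun_prop

theorem I_neg (x : ℝ) : I (-x) = I x := by
  have h := intervalIntegral.integral_comp_neg (a := 0) (b := x)
    fun u : ℝ => exp (u ^ 2 / 2) * erf (u / √2)
  simp only [neg_sq, neg_div, erf_neg, mul_neg, intervalIntegral.integral_neg, neg_zero] at h
  rw [I, I, intervalIntegral.integral_symm (-x) 0, ← h, neg_neg]

theorem I_abs (x : ℝ) : I |x| = I x := by
  rcases abs_choice x with h | h <;> simp [h, I_neg]

theorem I_integrand_le {u v : ℝ} (hu : 0 ≤ u) (huv : u ≤ v) :
    exp (u ^ 2 / 2) * erf (u / √2) ≤ exp (v ^ 2 / 2) * erf (v / √2) :=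
  mul_le_mul (exp_le_exp.2 (by gcongr)) (monotone_erf (by gcongr)) (erf_nonneg (by positivity))
    (exp_pos _).le

theorem I_add_mul_le_I {a y : ℝ} (ha : 0 ≤ a) (hay : a ≤ y) :
    I a + (y - a) * (exp (a ^ 2 / 2) * erf (a / √2)) ≤ I y := by
  have hint := continuous_I_integrand.intervalIntegrable (μ := volume)
  rw [I, I, ← intervalIntegral.integral_add_adjacent_intervals (hint 0 a) (hint a y)]
  gcongr
  calc (y - a) * (exp (a ^ 2 / 2) * erf (a / √2))
      = ∫ _ in a..y, exp (a ^ 2 / 2) * erf (a / √2) := by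
        rw [intervalIntegral.integral_const, smul_eq_mul]
    _ ≤ ∫ u in a..y, exp (u ^ 2 / 2) * erf (u / √2) :=
      intervalIntegral.integral_mono_on hay intervalIntegrable_const (hint a y)
        fun u hu => I_integrand_le ha hu.1

theorem integral_mul_exp_sq_div_two (a : ℝ) :
    ∫ u in (0 : ℝ)..a, u * exp (u ^ 2 / 2) = exp (a ^ 2 / 2) - 1 := by
  have hderiv (u : ℝ) : HasDerivAt (fun v : ℝ => exp (v ^ 2 / 2)) (u * exp (u ^ 2 / 2)) u := by
    refine ((hasDerivAt_pow 2 u).div_const 2).exp.congr_deriv ?_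
    ring
  rw [intervalIntegral.integral_eq_sub_of_hasDerivAt (fun u _ => hderiv u)
    ((by fun_prop : Continuous fun u : ℝ => u * exp (u ^ 2 / 2)).intervalIntegrable 0 a)]
  simp

theorem erf_mul_exp_sub_one_div_le_I {a : ℝ} (ha : 0 < a) :
    erf (a / √2) * (exp (a ^ 2 / 2) - 1) / a ≤ I a := by
  have hpt : ∀ u ∈ Icc 0 a, erf (a / √2) / a * (u * exp (u ^ 2 / 2)) ≤
      exp (u ^ 2 / 2) * erf (u / √2) := by
    intro u ⟨hu₀, hua⟩
    have h := concaveOn_erf.mul_le_map_mul erf_zero (div_nonneg hu₀ ha.le)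
      ((div_le_one ha).2 hua) (by positivity : 0 ≤ a / √2)
    rw [div_mul_div_cancel₀ ha.ne'] at h
    calc erf (a / √2) / a * (u * exp (u ^ 2 / 2))
        = exp (u ^ 2 / 2) * (u / a * erf (a / √2)) := by ring
      _ ≤ exp (u ^ 2 / 2) * erf (u / √2) := by gcongr
  calc erf (a / √2) * (exp (a ^ 2 / 2) - 1) / a
      = ∫ u in (0 : ℝ)..a, erf (a / √2) / a * (u * exp (u ^ 2 / 2)) := by
        rw [intervalIntegral.integral_const_mul, integral_mul_exp_sq_div_two]
        ring
    _ ≤ I a := intervalIntegral.integral_mono_on ha.le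
        ((by fun_prop : Continuous _).intervalIntegrable 0 a)
        (continuous_I_integrand.intervalIntegrable 0 a) hpt

theorem abs_le_of_I_le {a E τ x : ℝ} (ha : 0 < a) (hE : 0 < E) (hEa : E ≤ erf (a / √2))
    (hτ : E * (exp (a ^ 2 / 2) - 1) / a ≤ τ) (hx : I x ≤ τ) :
    |x| ≤ a + (τ - E * (exp (a ^ 2 / 2) - 1) / a) / (exp (a ^ 2 / 2) * E) := by
  rcases le_or_gt |x| a with hxa | hxa
  · have : 0 ≤ (τ - E * (exp (a ^ 2 / 2) - 1) / a) / (exp (a ^ 2 / 2) * E) :=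
      div_nonneg (sub_nonneg.2 hτ) (by positivity)
    linarith
  rw [← sub_le_iff_le_add', le_div_iff₀ (by positivity)]
  have hexp : 0 ≤ exp (a ^ 2 / 2) - 1 := sub_nonneg.2 (one_le_exp (by positivity))
  have h₁ := I_add_mul_le_I ha.le hxa.le
  have h₂ := erf_mul_exp_sub_one_div_le_I ha
  have h₃ : E * (exp (a ^ 2 / 2) - 1) / a ≤ erf (a / √2) * (exp (a ^ 2 / 2) - 1) / a := by
    gcongr
  have h₄ : (|x| - a) * (exp (a ^ 2 / 2) * E) ≤
      (|x| - a) * (exp (a ^ 2 / 2) * erf (a / √2)) := by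
    gcongr
  rw [I_abs] at h₁
  linarith

theorem div_one_add_le_log_one_add {s : ℝ} (hs : 0 ≤ s) : s / (1 + s) ≤ log (1 + s) := by
  convert one_sub_inv_le_log_of_pos (by linarith : 0 < 1 + s) using 1
  field_simp
  ring

theorem div_add_two_sqrt_two_le {τ : ℝ} (hτ : 0 ≤ τ) :
    τ / (τ + 2 * √2) ≤ √2 * τ / (1 + √2 * τ) := by
  rw [div_le_div_iff₀ (by positivity) (by positivity)]
  nlinarith [sq_sqrt (zero_le_two : (0 : ℝ) ≤ 2)]

theorem residual_factor_pos {s : ℝ} (hs : 0 < s) :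
    0 < (1 + s) * (2 * log (1 + s) - 1) + log (1 + s) + 1 := by
  have h := (div_le_iff₀ (by positivity)).1 (div_one_add_le_log_one_add hs.le)
  nlinarith [log_pos (by linarith : 1 < 1 + s)]

theorem residual_factor_div_le {s : ℝ} (hs : 0 < s) :
    1 / (2 * log (1 + s)) * ((1 + s) * (2 * log (1 + s) - 1) + log (1 + s) + 1) ≤ 1 + s := by
  have hL : 0 < log (1 + s) := log_pos (by linarith)
  rw [div_mul_eq_mul_div, one_mul, div_le_iff₀ (by positivity)]
  linarith [log_le_sub_one_of_pos (by linarith : 0 < 1 + s)]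

theorem abs_le_of_I_le_of_le_sqrt {τ E D x : ℝ} (hτ : 0 < τ) (hE : 0 < E)
    (hE' : E ≤ √(√2 * τ / (1 + √2 * τ))) (hD : 0 < D) (hDE : D ≤ (1 + √2 * τ) * E)
    (hx : I x ≤ τ) :
    |x| ≤ √(2 * log (1 + √2 * τ)) + τ * (1 - E / √(log (1 + √2 * τ))) / D := by
  set s := √2 * τ with hs_def
  set L := log (1 + s)
  have hs : 0 < s := by positivity
  have hL : 0 < L := log_pos (by linarith)
  have hEL : E ≤ √L := hE'.trans (sqrt_le_sqrt (div_one_add_le_log_one_add hs.le))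
  have ha : √(2 * L) / √2 = √L := by
    rw [sqrt_mul zero_le_two, mul_div_cancel_left₀ _ (sqrt_pos.2 zero_lt_two).ne']
  have hexp : exp (√(2 * L) ^ 2 / 2) = 1 + s := by
    rw [sq_sqrt (by positivity), mul_div_cancel_left₀ _ two_ne_zero, exp_log (by positivity)]
  have hkey : τ - E * (exp (√(2 * L) ^ 2 / 2) - 1) / √(2 * L) = τ * (1 - E / √L) := by
    rw [hexp, sqrt_mul zero_le_two, hs_def]
    field_simp
    ring
  have hnum : 0 ≤ τ * (1 - E / √L) :=
    mul_nonneg hτ.le (sub_nonneg.2 ((div_le_one (sqrt_pos.2 hL)).2 hEL))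
  have hEerf : E ≤ erf (√(2 * L) / √2) :=
    ha ▸ hE'.trans (sqrt_div_one_add_le_erf_sqrt_log hs.le)
  have h := abs_le_of_I_le (sqrt_pos.2 (by positivity)) hE hEerf (sub_nonneg.1 (hkey ▸ hnum)) hx
  rw [hkey, hexp] at h
  exact h.trans (by gcongr)

/-- **Inversion of `I`** (Lemma 11): if `I x ≤ τ` for some `τ > 0`, then
`|x| ≤ √(2 ln(1 + √2 τ)) + R(τ)` with the explicit residual `R(τ)`. -/
theorem invert_I {τ x : ℝ} (hτ : 0 < τ) (hx : I x ≤ τ) :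
    |x| ≤ Real.sqrt (2 * Real.log (1 + Real.sqrt 2 * τ)) +
      τ * (1 - Real.sqrt ((τ / (τ + 2 * Real.sqrt 2)) *
          (1 / Real.log (1 + Real.sqrt 2 * τ)))) /
        ((1 / (2 * Real.log (1 + Real.sqrt 2 * τ))) *
          ((1 + Real.sqrt 2 * τ) * (2 * Real.log (1 + Real.sqrt 2 * τ) - 1) +
            Real.log (1 + Real.sqrt 2 * τ) + 1) *
          Real.sqrt (τ / (τ + 2 * Real.sqrt 2))) := by
  have hs : 0 < √2 * τ := by positivity
  have hE : 0 < √(τ / (τ + 2 * √2)) := sqrt_pos.2 (by positivity)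
  rw [sqrt_mul (by positivity : 0 ≤ τ / (τ + 2 * √2)), one_div (log _), sqrt_inv,
    ← div_eq_mul_inv]
  refine abs_le_of_I_le_of_le_sqrt hτ hE (sqrt_le_sqrt (div_add_two_sqrt_two_le hτ.le)) ?_ ?_ hx
  · have := residual_factor_pos hs
    have := log_pos (by linarith : 1 < 1 + √2 * τ)
    positivity
  · exact mul_le_mul_of_nonneg_right (residual_factor_div_le hs) hE.le
end

section
/- Fix 0 < d ≤ 1. Let f(x) = (1/√(2π))·ln(1+x), u(x) = (1/d)·(e + x)·ln²(e + x), and g(x) = u(f(x)) - f(x), all for x ≥ 0. Then: (i) g(x) ≥ f(x) for all x ≥ 0; (ii) g is increasing on [0,∞); and (iii) ∫_0^∞ f'(x)/(f(x) + g(x)) dx = d. -/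
/-!
With `h y = d / log (e + y)` one has `u = -1 / h'`, so `f' / (f + g) = f' / u(f) = -(h ∘ f)'`, and
the integral telescopes to `h (f 0) - h (∞) = h 0 = d`. Parts (i) and (ii) are elementary
inequalities for `y ↦ (e + y) log² (e + y)`, transported along the increasing map `f ≥ 0`.
-/

open MeasureTheory Real Set Filter Topology

lemma one_le_log_exp_one_add {y : ℝ} (hy : 0 ≤ y) : 1 ≤ log (exp 1 + y) := by
  calc 1 = log (exp 1) := (log_exp 1).symm
    _ ≤ log (exp 1 + y) := log_le_log (exp_pos 1) (by linarith)

lemma two_mul_le_mul_log_exp_one_add_sq {y : ℝ} (hy : 0 ≤ y) :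
    2 * y ≤ (exp 1 + y) * log (exp 1 + y) ^ 2 := by
  have ht : 0 < exp 1 + y := by positivity
  have hlin : y ≤ (exp 1 + y) * (log (exp 1 + y) - 1) := by
    have h := one_sub_inv_le_log_of_pos (div_pos ht (exp_pos 1))
    rw [log_div ht.ne' (exp_pos 1).ne', log_exp, inv_div, sub_le_iff_le_add] at h
    have : exp 1 / (exp 1 + y) * (exp 1 + y) = exp 1 := div_mul_cancel₀ _ ht.ne'
    nlinarith
  -- with `L = log (e + y)`: `L² ≥ 2L - 1`, so `(e + y) L² ≥ (e + y) + 2 (e + y) (L - 1) ≥ 2y`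
  nlinarith [mul_nonneg ht.le (sq_nonneg (log (exp 1 + y) - 1))]

lemma sub_lt_mul_log_exp_one_add_sq_sub {y₁ y₂ : ℝ} (hy₁ : 0 ≤ y₁) (h : y₁ < y₂) :
    y₂ - y₁ < (exp 1 + y₂) * log (exp 1 + y₂) ^ 2 - (exp 1 + y₁) * log (exp 1 + y₁) ^ 2 := by
  have hL₁ := one_le_log_exp_one_add hy₁
  have hL : log (exp 1 + y₁) < log (exp 1 + y₂) := log_lt_log (by positivity) (by linarith)
  nlinarith [mul_pos (show 0 < exp 1 + y₂ by linarith [exp_pos 1])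
      (show 0 < log (exp 1 + y₂) ^ 2 - log (exp 1 + y₁) ^ 2 by nlinarith),
    mul_le_mul_of_nonneg_left (show 1 ≤ log (exp 1 + y₁) ^ 2 by nlinarith) (sub_nonneg.2 h.le)]

lemma strictMonoOn_const_mul_mul_log_exp_one_add_sq_sub {c : ℝ} (hc : 1 ≤ c) :
    StrictMonoOn (fun y ↦ c * ((exp 1 + y) * log (exp 1 + y) ^ 2) - y) (Ici 0) := by
  intro y₁ hy₁ y₂ _ h
  have hlt := sub_lt_mul_log_exp_one_add_sq_sub hy₁ h
  nlinarith [mul_le_mul_of_nonneg_right hc (show 0 ≤ (exp 1 + y₂) * log (exp 1 + y₂) ^ 2 -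
    (exp 1 + y₁) * log (exp 1 + y₁) ^ 2 by linarith)]

lemma hasDerivAt_inv_log_exp_one_add {y : ℝ} (hy : 0 ≤ y) :
    HasDerivAt (fun y ↦ (log (exp 1 + y))⁻¹) (-1 / ((exp 1 + y) * log (exp 1 + y) ^ 2)) y := by
  have hL := one_le_log_exp_one_add hy
  have ht : exp 1 + y ≠ 0 := by positivity
  refine ((((hasDerivAt_id' y).const_add (exp 1)).log ht).inv (by positivity)).congr_deriv ?_
  field_simp

lemma tendsto_inv_log_exp_one_add_atTop :
    Tendsto (fun y ↦ (log (exp 1 + y))⁻¹) atTop (𝓝 0) :=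
  tendsto_inv_atTop_zero.comp (tendsto_log_atTop.comp (tendsto_atTop_add_const_left _ _ tendsto_id))

theorem integral_Ioi_deriv_div_mul_log_exp_one_add_sq {F F' : ℝ → ℝ} {a : ℝ}
    (hF : ∀ x ∈ Ici a, HasDerivAt F (F' x) x) (hF_nonneg : ∀ x ∈ Ici a, 0 ≤ F x)
    (hF'_nonneg : ∀ x ∈ Ioi a, 0 ≤ F' x) (hF_top : Tendsto F atTop atTop) :
    ∫ x in Ioi a, F' x / ((exp 1 + F x) * log (exp 1 + F x) ^ 2) = (log (exp 1 + F a))⁻¹ := by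
  have hderiv : ∀ x ∈ Ici a, HasDerivAt (fun x ↦ -(log (exp 1 + F x))⁻¹)
      (F' x / ((exp 1 + F x) * log (exp 1 + F x) ^ 2)) x := fun x hx ↦ by
    refine (((hasDerivAt_inv_log_exp_one_add (hF_nonneg x hx)).comp x (hF x hx)).neg).congr_deriv ?_
    ring
  have hpos : ∀ x ∈ Ioi a, 0 ≤ F' x / ((exp 1 + F x) * log (exp 1 + F x) ^ 2) := fun x hx ↦
    div_nonneg (hF'_nonneg x hx) (by have := hF_nonneg x (mem_Ici_of_Ioi hx); positivity)
  have hlim : Tendsto (fun x ↦ -(log (exp 1 + F x))⁻¹) atTop (𝓝 0) := by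
    simpa using (tendsto_inv_log_exp_one_add_atTop.comp hF_top).neg
  rw [integral_Ioi_of_hasDerivAt_of_nonneg' hderiv hpos hlim]
  ring

/-- **Choice of threshold for the LIL** (Lemma 12): with
`f x = ln(1+x)/√(2π)`, `u x = (1/d)(e+x) ln²(e+x)` and `g = u ∘ f - f`
for `0 < d ≤ 1`: (i) `g ≥ f` on `[0,∞)`; (ii) `g` is increasing on `[0,∞)`;
(iii) `∫_0^∞ f'(x)/(f x + g x) dx = d`. -/
theorem lil_threshold_choice {d : ℝ} (hd : 0 < d) (hd1 : d ≤ 1)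
    (f u g : ℝ → ℝ)
    (hf : ∀ x, f x = (1 / Real.sqrt (2 * π)) * Real.log (1 + x))
    (hu : ∀ x, u x = (1 / d) * (Real.exp 1 + x) * (Real.log (Real.exp 1 + x)) ^ 2)
    (hg : ∀ x, g x = u (f x) - f x) :
    (∀ x, 0 ≤ x → f x ≤ g x) ∧
    StrictMonoOn g (Set.Ici 0) ∧
    ∫ x in Set.Ioi (0 : ℝ), deriv f x / (f x + g x) = d := by
  set c := 1 / √(2 * π)
  have hc : 0 < c := by positivity
  obtain rfl : f = fun x ↦ c * log (1 + x) := funext hf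
  have hf_deriv : ∀ x ∈ Ici (0 : ℝ), HasDerivAt (fun x ↦ c * log (1 + x)) (c / (1 + x)) x :=
    fun x hx ↦ by
      simpa [div_eq_mul_inv] using
        (((hasDerivAt_id' x).const_add 1).log (by linarith [mem_Ici.1 hx])).const_mul c
  have hf_nonneg : ∀ x ∈ Ici (0 : ℝ), 0 ≤ c * log (1 + x) := fun x hx ↦
    mul_nonneg hc.le (log_nonneg (by linarith [mem_Ici.1 hx]))
  have hf_mono : StrictMonoOn (fun x ↦ c * log (1 + x)) (Ici 0) := fun a ha b _ hab ↦
    mul_lt_mul_of_pos_left (log_lt_log (by linarith [mem_Ici.1 ha]) (by linarith)) hc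
  have hf_top : Tendsto (fun x ↦ c * log (1 + x)) atTop atTop :=
    (tendsto_log_atTop.comp (tendsto_atTop_add_const_left _ 1 tendsto_id)).const_mul_atTop hc
  have hg_comp : g = (fun y ↦ 1 / d * ((exp 1 + y) * log (exp 1 + y) ^ 2) - y) ∘
      fun x ↦ c * log (1 + x) := funext fun x ↦ by rw [hg, hu]; simp only [Function.comp]; ring
  have hd_inv : 1 ≤ 1 / d := one_le_one_div hd hd1
  refine ⟨fun x hx ↦ ?_, ?_, ?_⟩
  · have h2 := two_mul_le_mul_log_exp_one_add_sq (hf_nonneg x hx)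
    have hscale := le_mul_of_one_le_left (h2.trans' (by linarith [hf_nonneg x hx])) hd_inv
    rw [hg_comp]
    simp only [Function.comp]
    linarith
  · rw [hg_comp]
    exact (strictMonoOn_const_mul_mul_log_exp_one_add_sq_sub hd_inv).comp hf_mono hf_nonneg
  · calc ∫ x in Ioi 0, deriv (fun x ↦ c * log (1 + x)) x / (c * log (1 + x) + g x)
        = ∫ x in Ioi 0, d * (c / (1 + x) /
            ((exp 1 + c * log (1 + x)) * log (exp 1 + c * log (1 + x)) ^ 2)) := by
          refine setIntegral_congr_fun measurableSet_Ioi fun x hx ↦ ?_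
          rw [(hf_deriv x (mem_Ici_of_Ioi hx)).deriv, hg_comp]
          simp only [Function.comp]
          field_simp
          ring
      _ = d * (log (exp 1 + c * log (1 + 0)))⁻¹ := by
          rw [integral_const_mul, integral_Ioi_deriv_div_mul_log_exp_one_add_sq hf_deriv hf_nonneg
            (fun x hx ↦ by have : (0 : ℝ) < x := hx; positivity) hf_top]
      _ = d := by simp
end

section
/- Define I(x) = ∫_0^x e^{u²/2} · erf(u/√2) du. Then for every real x, I(x) = √(2/π) · ∫_0^∞ [e^{(x²/2)·sech²(w)} - 1] dw. -/
/-!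
Substituting `t = u s` gives `e^{u²/2} erf(u/√2) = √(2/π) ∫₀¹ u e^{u²(1-s²)/2} ds`. Swapping the
two integrals and integrating in `u` turns `I x` into `√(2/π) ∫₀¹ (e^{x²(1-s²)/2} - 1)/(1-s²) ds`,
and the substitution `s = tanh w`, for which `ds = sech² w dw` and `1 - s² = sech² w`, gives the
integral over `w > 0`.
-/

open MeasureTheory Real

open Set Function

theorem intervalIntegral_integral_swap_of_continuous {E : Type*} [NormedAddCommGroup E]
    [NormedSpace ℝ E] {F : ℝ → ℝ → E} (hF : Continuous (uncurry F)) (a b c d : ℝ) :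
    ∫ x in a..b, ∫ y in c..d, F x y = ∫ y in c..d, ∫ x in a..b, F x y := by
  simp only [intervalIntegral.intervalIntegral_eq_integral_uIoc, integral_smul]
  rw [smul_comm, integral_integral_swap]
  rw [Measure.prod_restrict, ← Measure.volume_eq_prod]
  exact (hF.continuousOn.integrableOn_compact (isCompact_uIcc.prod isCompact_uIcc)).mono_set
    (prod_mono uIoc_subset_uIcc uIoc_subset_uIcc)

namespace Real

theorem one_sub_tanh_sq (w : ℝ) : 1 - tanh w ^ 2 = (1 / cosh w) ^ 2 := by
  have := cosh_pos w
  rw [tanh_eq_sinh_div_cosh]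
  field_simp
  linarith [cosh_sq' w]

theorem hasDerivAt_tanh (w : ℝ) : HasDerivAt tanh ((1 / cosh w) ^ 2) w := by
  have h := (hasDerivAt_sinh w).div (hasDerivAt_cosh w) (cosh_pos w).ne'
  rw [show tanh = sinh / cosh from funext tanh_eq_sinh_div_cosh, ← one_sub_tanh_sq]
  refine h.congr_deriv ?_
  rw [tanh_eq_sinh_div_cosh]
  field_simp

theorem tanh_image_Ioi_zero : tanh '' Ioi 0 = Ioo 0 1 := by
  ext s
  constructor
  · rintro ⟨w, hw, rfl⟩
    exact ⟨by rw [tanh_eq_sinh_div_cosh]; exact div_pos (sinh_pos_iff.2 hw) (cosh_pos w),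
      tanh_lt_one w⟩
  · intro hs
    exact ⟨artanh s, artanh_pos hs, tanh_artanh ⟨by linarith [hs.1], hs.2⟩⟩

theorem integral_Ioi_sech_sq_mul_comp_tanh (g : ℝ → ℝ) :
    ∫ w in Ioi 0, (1 / cosh w) ^ 2 * g (tanh w) = ∫ s in Ioo 0 1, g s := by
  rw [← tanh_image_Ioi_zero, integral_image_eq_integral_abs_deriv_smul measurableSet_Ioi
    (fun w _ => (hasDerivAt_tanh w).hasDerivWithinAt) tanh_injective.injOn]
  simp only [abs_sq, smul_eq_mul]

end Real

theorem mul_integral_mul_exp_sq_div_two_mul (c x : ℝ) :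
    c * ∫ u in 0..x, u * exp (u ^ 2 / 2 * c) = exp (x ^ 2 / 2 * c) - 1 := by
  have hderiv (u : ℝ) :
      HasDerivAt (fun v => exp (v ^ 2 / 2 * c)) (c * u * exp (u ^ 2 / 2 * c)) u := by
    convert (((hasDerivAt_pow 2 u).div_const 2).mul_const c).exp using 1
    ring
  rw [← intervalIntegral.integral_const_mul]
  simp only [← mul_assoc]
  rw [intervalIntegral.integral_eq_sub_of_hasDerivAt (fun u _ => hderiv u)
    ((by fun_prop : Continuous _).intervalIntegrable _ _)]
  simp

theorem erf_div_sqrt_two (u : ℝ) :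
    erf (u / √2) = √(2 / π) * ∫ t in 0..u, exp (-(t ^ 2 / 2)) := by
  have hsqrt : 2 / √π * (√2)⁻¹ = √(2 / π) := by
    rw [sqrt_div zero_le_two]
    field_simp
    rw [sq_sqrt zero_le_two]
  have hsubst := intervalIntegral.smul_integral_comp_mul_left (fun t => exp (-t ^ 2)) (√2)⁻¹
    (a := 0) (b := u)
  rw [mul_zero, smul_eq_mul] at hsubst
  rw [erf, div_eq_inv_mul u, ← hsubst, ← mul_assoc, hsqrt]
  congr 1
  refine intervalIntegral.integral_congr fun t _ => ?_
  rw [mul_pow, inv_pow, sq_sqrt zero_le_two]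
  ring_nf

theorem exp_sq_div_two_mul_integral_gaussian (u : ℝ) :
    exp (u ^ 2 / 2) * ∫ t in 0..u, exp (-(t ^ 2 / 2)) =
      ∫ s in 0..1, u * exp (u ^ 2 / 2 * (1 - s ^ 2)) := by
  have hsubst := intervalIntegral.smul_integral_comp_mul_left (fun t => exp (-(t ^ 2 / 2))) u
    (a := 0) (b := 1)
  rw [mul_zero, mul_one, smul_eq_mul] at hsubst
  rw [← hsubst, ← intervalIntegral.integral_const_mul, ← intervalIntegral.integral_const_mul]
  refine intervalIntegral.integral_congr fun s _ => ?_
  rw [show u ^ 2 / 2 * (1 - s ^ 2) = u ^ 2 / 2 + -((u * s) ^ 2 / 2) by ring, exp_add]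
  ring

/-- **Hyperbolic-secant rewrite of `I`** (equation (13)):
`I x = √(2/π) ∫_0^∞ [e^{(x²/2) sech²(w)} - 1] dw`. -/
theorem I_sech_rewrite (x : ℝ) :
    I x = Real.sqrt (2 / π) *
      ∫ w in Set.Ioi (0 : ℝ), (Real.exp ((x ^ 2 / 2) * (1 / Real.cosh w) ^ 2) - 1) := by
  calc I x = √(2 / π) * ∫ u in 0..x, ∫ s in 0..1, u * exp (u ^ 2 / 2 * (1 - s ^ 2)) := by
        rw [I, ← intervalIntegral.integral_const_mul]
        refine intervalIntegral.integral_congr fun u _ => ?_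
        rw [erf_div_sqrt_two, mul_left_comm, exp_sq_div_two_mul_integral_gaussian]
    _ = √(2 / π) * ∫ s in Ioo 0 1, ∫ u in 0..x, u * exp (u ^ 2 / 2 * (1 - s ^ 2)) := by
        rw [intervalIntegral_integral_swap_of_continuous (by fun_prop),
          intervalIntegral.integral_of_le zero_le_one, integral_Ioc_eq_integral_Ioo]
    _ = _ := by
        rw [← integral_Ioi_sech_sq_mul_comp_tanh]
        congr 1
        refine setIntegral_congr_fun measurableSet_Ioi fun w _ => ?_
        rw [one_sub_tanh_sq, mul_integral_mul_exp_sq_div_two_mul]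
end
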